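/- arXiv:1804.00215 — 7 statements merged into one kernel-verified Lean document; each statement's English description precedes it below -/
import Mathlib

section
/- In a two-dimensional normed space with anti-norm ||·||_a defined via a symplectic form ω, if v is Birkhoff orthogonal to w with respect to the norm ||·||, then w is Birkhoff orthogonal to v with respect to the anti-norm ||·||_a (the anti-norm reverses Birkhoff orthogonality). -/
/-!
Put `c = ω v w`. On a plane every alternating form satisfies Cramer's identity
`c • x = ω x w • v + ω v x • w`, and Birkhoff orthogonality `v ⊣ w` gives
`|a| ‖v‖ ≤ ‖a • v + b • w‖`; together they bound `|ω x w| ‖v‖ ≤ |c| ‖x‖`, i.e. `‖w‖ₐ ‖v‖ ≤ |c|`.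
Conversely `ω v (w + l • v) = c`, so testing the anti-norm of `w + l • v` at `±v / ‖v‖` gives
`|c| ≤ ‖w + l • v‖ₐ ‖v‖`.
-/

noncomputable def antinorm {X : Type*} [NormedAddCommGroup X] [NormedSpace ℝ X]
    (ω : X →ₗ[ℝ] X →ₗ[ℝ] ℝ) (y : X) : ℝ :=
  sSup ((fun x => ω x y) '' {x : X | ‖x‖ ≤ 1})

theorem LinearMap.IsAlt.smul_eq_of_finrank_eq_two {K V : Type*} [Field K] [AddCommGroup V]
    [Module K V] (hdim : Module.finrank K V = 2) {ω : V →ₗ[K] V →ₗ[K] K} (hω : ω.IsAlt)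
    (v w x : V) : ω v w • x = ω x w • v + ω v x • w := by
  have : FiniteDimensional K V := .of_finrank_pos (by omega)
  by_cases hv : v = 0
  · simp [hv]
  by_cases hw : ∃ a : K, a • v = w
  · obtain ⟨a, rfl⟩ := hw
    simp only [map_smul, hω.self_eq_zero, smul_zero, ← hω.neg x v]
    module
  have hli : LinearIndependent K ![w, v] := by
    push Not at hw
    exact linearIndependent_fin2.2 ⟨hv, hw⟩
  have hspan := hli.span_eq_top_of_card_eq_finrank (by simp [hdim])
  rw [Matrix.range_cons_cons_empty] at hspan
  obtain ⟨a, b, rfl⟩ := Submodule.mem_span_pair.1 (hspan ▸ Submodule.mem_top (x := x))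
  simp only [map_add, map_smul, LinearMap.add_apply, LinearMap.smul_apply, hω.self_eq_zero,
    smul_eq_mul, ← hω.neg w v]
  module

theorem abs_mul_norm_le_norm_smul_add_smul {E : Type*} [SeminormedAddCommGroup E]
    [NormedSpace ℝ E] {v w : E} (hB : ∀ l : ℝ, ‖v‖ ≤ ‖v + l • w‖) (a b : ℝ) :
    |a| * ‖v‖ ≤ ‖a • v + b • w‖ := by
  rcases eq_or_ne a 0 with rfl | ha
  · simp
  calc |a| * ‖v‖ ≤ |a| * ‖v + (b / a) • w‖ := by gcongr; exact hB _
    _ = ‖a • v + b • w‖ := by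
      rw [← Real.norm_eq_abs, ← norm_smul, smul_add, smul_smul, mul_div_cancel₀ _ ha]

section antinorm

variable {X : Type*} [NormedAddCommGroup X] [NormedSpace ℝ X] {ω : X →ₗ[ℝ] X →ₗ[ℝ] ℝ}

theorem antinorm_le {y : X} {C : ℝ} (h : ∀ x, ‖x‖ ≤ 1 → ω x y ≤ C) : antinorm ω y ≤ C :=
  csSup_le ⟨ω 0 y, 0, by simp⟩ (by rintro _ ⟨x, hx, rfl⟩; exact h x hx)

theorem antinorm_mul_norm_le_of_birkhoff (hdim : Module.finrank ℝ X = 2) (hω : ω.IsAlt)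
    {v w : X} (hB : ∀ l : ℝ, ‖v‖ ≤ ‖v + l • w‖) : antinorm ω w * ‖v‖ ≤ |ω v w| := by
  rcases eq_or_ne v 0 with rfl | hv
  · simp
  have hv_pos : 0 < ‖v‖ := norm_pos_iff.2 hv
  rw [← le_div_iff₀ hv_pos]
  refine antinorm_le fun x hx => (le_div_iff₀ hv_pos).2 ?_
  calc ω x w * ‖v‖ ≤ |ω x w| * ‖v‖ := by gcongr; exact le_abs_self _
    _ ≤ ‖ω x w • v + ω v x • w‖ := abs_mul_norm_le_norm_smul_add_smul hB _ _
    _ = |ω v w| * ‖x‖ := by rw [← hω.smul_eq_of_finrank_eq_two hdim, norm_smul, Real.norm_eq_abs]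
    _ ≤ |ω v w| := mul_le_of_le_one_right (abs_nonneg _) hx

variable [FiniteDimensional ℝ X]

theorem le_antinorm {x : X} (hx : ‖x‖ ≤ 1) (y : X) : ω x y ≤ antinorm ω y := by
  set L := LinearMap.toContinuousLinearMap (ω.flip y)
  refine le_csSup ⟨‖L‖, ?_⟩ ⟨x, hx, rfl⟩
  rintro _ ⟨z, hz, rfl⟩
  calc ω z y ≤ ‖L z‖ := le_abs_self _
    _ ≤ ‖L‖ * 1 := L.le_of_opNorm_le_of_le le_rfl hz
    _ = ‖L‖ := mul_one _

theorem apply_le_antinorm_mul_norm (x y : X) : ω x y ≤ antinorm ω y * ‖x‖ := by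
  rcases eq_or_ne x 0 with rfl | hx
  · simp
  calc ω x y = ω (‖x‖⁻¹ • x) y * ‖x‖ := by
        rw [map_smul, LinearMap.smul_apply, smul_eq_mul]; field_simp
    _ ≤ antinorm ω y * ‖x‖ := by gcongr; exact le_antinorm (norm_smul_inv_norm hx).le y

theorem abs_apply_le_antinorm_mul_norm (x y : X) : |ω x y| ≤ antinorm ω y * ‖x‖ := by
  refine abs_le'.2 ⟨apply_le_antinorm_mul_norm x y, ?_⟩
  simpa using apply_le_antinorm_mul_norm (ω := ω) (-x) y

end antinorm

theorem antinorm_reverses_birkhoff_general {X : Type*} [NormedAddCommGroup X] [NormedSpace ℝ X]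
    (hdim : Module.finrank ℝ X = 2)
    (ω : X →ₗ[ℝ] X →ₗ[ℝ] ℝ)
    (halt : ∀ x : X, ω x x = 0)
    (v w : X)
    (hB : ∀ l : ℝ, ‖v‖ ≤ ‖v + l • w‖) :
    ∀ l : ℝ, antinorm ω w ≤ antinorm ω (w + l • v) := by
  have : FiniteDimensional ℝ X := .of_finrank_pos (by omega)
  intro l
  rcases eq_or_ne v 0 with rfl | hv
  · simp
  refine le_of_mul_le_mul_right ?_ (norm_pos_iff.2 hv)
  calc antinorm ω w * ‖v‖ ≤ |ω v w| := antinorm_mul_norm_le_of_birkhoff hdim halt hB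
    _ = |ω v (w + l • v)| := by simp [halt v]
    _ ≤ antinorm ω (w + l • v) * ‖v‖ := abs_apply_le_antinorm_mul_norm v _

theorem antinorm_reverses_birkhoff {X : Type*} [NormedAddCommGroup X] [NormedSpace ℝ X]
    (hdim : Module.finrank ℝ X = 2)
    (ω : X →ₗ[ℝ] X →ₗ[ℝ] ℝ)
    (halt : ∀ x : X, ω x x = 0)
    (hnd : ∀ x : X, (∀ y : X, ω x y = 0) → x = 0)
    (v w : X)
    (hB : ∀ l : ℝ, ‖v‖ ≤ ‖v + l • w‖) :
    ∀ l : ℝ, antinorm ω w ≤ antinorm ω (w + l • v) :=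
  antinorm_reverses_birkhoff_general hdim ω halt v w hB
end

section
/- For any two vectors u, v in a two-dimensional normed space with symplectic form ω and associated anti-norm, one has |ω(u,v)| ≤ ||u|| · ||v||_a, with equality if and only if u is Birkhoff orthogonal to v (where u, v are nonzero). -/
theorem abs_omega_le_norm_mul_antinorm {X : Type*} [NormedAddCommGroup X] [NormedSpace ℝ X]
    (hdim : Module.finrank ℝ X = 2)
    (ω : X →ₗ[ℝ] X →ₗ[ℝ] ℝ)
    (halt : ∀ x : X, ω x x = 0)
    (hnd : ∀ x : X, (∀ y : X, ω x y = 0) → x = 0) :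
    (∀ u v : X, |ω u v| ≤ ‖u‖ * antinorm ω v) ∧
    (∀ u v : X, u ≠ 0 → v ≠ 0 →
      (|ω u v| = ‖u‖ * antinorm ω v ↔ ∀ l : ℝ, ‖u‖ ≤ ‖u + l • v‖)) := by
  have hfin : FiniteDimensional ℝ X := Module.finite_of_finrank_eq_succ hdim
  have hskew : ∀ x y : X, ω y x = -ω x y := by
    intro x y
    have h := halt (x + y)
    simp only [map_add, LinearMap.add_apply] at h
    have h1 := halt x
    have h2 := halt y
    linarith
  set F : X → X →L[ℝ] ℝ := fun w => LinearMap.toContinuousLinearMap (ω.flip w) with hFdef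
  have hF : ∀ w x, F w x = ω x w := by
    intro w x
    simp [hFdef, LinearMap.flip_apply]
  have hbdd : ∀ w : X, ∀ a ∈ (fun x => ω x w) '' {x : X | ‖x‖ ≤ 1}, a ≤ ‖F w‖ := by
    rintro w a ⟨x, hx, rfl⟩
    simp only [Set.mem_setOf_eq] at hx
    have h1 : ω x w ≤ |F w x| := by rw [hF]; exact le_abs_self _
    have h2 : |F w x| ≤ ‖F w‖ * ‖x‖ := by
      rw [← Real.norm_eq_abs]; exact (F w).le_opNorm x
    nlinarith [norm_nonneg (F w), norm_nonneg x]
  have key : ∀ w, antinorm ω w = ‖F w‖ := by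
    intro w
    unfold antinorm
    apply le_antisymm
    · exact csSup_le ⟨ω 0 w, ⟨0, by simp, rfl⟩⟩ (hbdd w)
    · have hmem : ∀ x : X, ‖x‖ ≤ 1 →
          F w x ≤ sSup ((fun x => ω x w) '' {x : X | ‖x‖ ≤ 1}) := by
        intro x hx
        exact le_csSup ⟨‖F w‖, hbdd w⟩ ⟨x, hx, (hF w x).symm⟩
      have hS0 : 0 ≤ sSup ((fun x => ω x w) '' {x : X | ‖x‖ ≤ 1}) := by
        have := hmem 0 (by simp)
        simpa using this
      apply ContinuousLinearMap.opNorm_le_of_unit_norm hS0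
      intro x hx
      have h1 := hmem x (le_of_eq hx)
      have h2 := hmem (-x) (by rw [norm_neg]; exact le_of_eq hx)
      rw [map_neg] at h2
      rw [Real.norm_eq_abs]
      exact abs_le.mpr ⟨by linarith, h1⟩
  have main : ∀ u v : X, |ω u v| ≤ ‖u‖ * antinorm ω v := by
    intro u v
    rw [key]
    calc |ω u v| = ‖F v u‖ := by rw [hF, Real.norm_eq_abs]
      _ ≤ ‖F v‖ * ‖u‖ := (F v).le_opNorm u
      _ = ‖u‖ * ‖F v‖ := mul_comm _ _
  refine ⟨main, ?_⟩
  intro u v hu hv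
  have hfv : F v ≠ 0 := by
    intro h
    apply hv
    apply hnd
    intro y
    have hy : ω y v = 0 := by
      rw [← hF v y, h]; rfl
    rw [hskew y v, hy, neg_zero]
  have hN : 0 < ‖F v‖ := norm_pos_iff.mpr hfv
  have hu0 : 0 < ‖u‖ := norm_pos_iff.mpr hu
  rw [key]
  constructor
  · intro heq l
    have hval : F v (u + l • v) = ω u v := by
      simp [hF, map_add, map_smul, halt]
    have h2 : |F v (u + l • v)| ≤ ‖F v‖ * ‖u + l • v‖ := by
      rw [← Real.norm_eq_abs]; exact (F v).le_opNorm _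
    rw [hval] at h2
    rw [heq] at h2
    have : ‖F v‖ * ‖u‖ ≤ ‖F v‖ * ‖u + l • v‖ := by linarith
    exact le_of_mul_le_mul_left this hN
  · intro hB
    have hle : |ω u v| ≤ ‖u‖ * ‖F v‖ := by
      have := main u v; rwa [key] at this
    refine le_antisymm hle ?_
    have hindep : LinearIndependent ℝ ![u, v] := by
      rw [LinearIndependent.pair_iff]
      intro s t hst
      have hs : s = 0 := by
        by_contra hs
        have h0 : u + (t / s) • v = 0 := by
          have : s⁻¹ • (s • u + t • v) = 0 := by rw [hst, smul_zero]
          rw [smul_add, smul_smul, smul_smul, inv_mul_cancel₀ hs, one_smul] at this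
          rw [div_eq_inv_mul, mul_comm]
          rw [mul_comm] at this
          simpa using this
        have := hB (t / s)
        rw [h0, norm_zero] at this
        exact hu (norm_le_zero_iff.mp this)
      refine ⟨hs, ?_⟩
      rw [hs, zero_smul, zero_add] at hst
      exact (smul_eq_zero.mp hst).resolve_right hv
    have hspan : ∀ x : X, ∃ a b : ℝ, a • u + b • v = x := by
      intro x
      have hsp : Submodule.span ℝ (Set.range ![u, v]) = ⊤ := by
        have h := (basisOfLinearIndependentOfCardEqFinrank hindep
          (by simp [hdim])).span_eq
        rwa [coe_basisOfLinearIndependentOfCardEqFinrank] at h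
      have hx : x ∈ Submodule.span ℝ ({u, v} : Set X) := by
        have : Set.range ![u, v] = {u, v} := by
          simp [Matrix.range_cons, Matrix.range_empty]
          ext z; simp [Fin.exists_fin_two]; tauto
        rw [← this, hsp]; trivial
      exact Submodule.mem_span_pair.mp hx
    have hbound : ‖F v‖ ≤ |ω u v| / ‖u‖ := by
      apply ContinuousLinearMap.opNorm_le_of_unit_norm
        (div_nonneg (abs_nonneg _) hu0.le)
      intro x hx
      obtain ⟨a, b, rfl⟩ := hspan x
      have hval : F v (a • u + b • v) = a * ω u v := by
        simp [hF, map_add, map_smul, halt]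
      rw [Real.norm_eq_abs, hval, abs_mul]
      rcases eq_or_ne a 0 with h | h
      · rw [h, abs_zero, zero_mul]
        positivity
      · have h3 : ‖u‖ ≤ ‖u + (b / a) • v‖ := hB (b / a)
        have h4 : ‖a • u + b • v‖ = |a| * ‖u + (b / a) • v‖ := by
          have he : a • (u + (b / a) • v) = a • u + b • v := by
            rw [smul_add, smul_smul, mul_div_cancel₀ b h]
          rw [← he, norm_smul, Real.norm_eq_abs]
        have h5 : |a| * ‖u‖ ≤ 1 := by
          rw [hx] at h4
          nlinarith [abs_nonneg a]
        rw [le_div_iff₀ hu0]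
        nlinarith [abs_nonneg (ω u v)]
    calc ‖u‖ * ‖F v‖ ≤ ‖u‖ * (|ω u v| / ‖u‖) := by
          exact mul_le_mul_of_nonneg_left hbound hu0.le
      _ = |ω u v| := by field_simp
end

section
/- The anti-norm of the anti-norm is the original norm: in a two-dimensional normed space, applying the anti-norm construction twice (with the same symplectic form ω, up to the natural sign/orientation convention) recovers the original norm; equivalently, ||x|| = sup{ω(y,x) : ||y||_a ≤ 1} for all x. -/
/-!
Since ω is nondegenerate and `X` is finite-dimensional, `y ↦ ω y` identifies `X` with its dual,
and since ω is alternating the anti-norm of `y` is the dual norm of `ω y`. The double anti-norm of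
`x` is therefore the supremum of `f x` over the dual unit ball, which is `‖x‖` by Hahn–Banach.
-/

open Metric

namespace ContinuousLinearMap

variable {E : Type*} [NormedAddCommGroup E] [NormedSpace ℝ E]

theorem sSup_image_unitClosedBall_eq_norm (f : StrongDual ℝ E) :
    sSup (f '' closedBall 0 1) = ‖f‖ := by
  have hbdd : ∀ r ∈ f '' closedBall 0 1, r ≤ ‖f‖ := by
    rintro - ⟨x, hx, rfl⟩
    exact (le_abs_self _).trans (f.unit_le_opNorm x (mem_closedBall_zero_iff.1 hx))
  have hne : (f '' closedBall 0 1).Nonempty := (nonempty_closedBall.2 zero_le_one).image f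
  refine le_antisymm (csSup_le hne hbdd) ?_
  rw [← f.sSup_unitClosedBall_eq_norm]
  refine csSup_le ((nonempty_closedBall.2 zero_le_one).image _) ?_
  rintro - ⟨x, hx, rfl⟩
  have hx' : -x ∈ closedBall (0 : E) 1 := by simpa using hx
  change ‖f x‖ ≤ _
  rw [Real.norm_eq_abs, abs_le]
  constructor
  · have := le_csSup ⟨‖f‖, hbdd⟩ (Set.mem_image_of_mem f hx')
    rw [map_neg] at this
    linarith
  · exact le_csSup ⟨‖f‖, hbdd⟩ (Set.mem_image_of_mem f hx)

end ContinuousLinearMap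

theorem NormedSpace.sSup_apply_dual_unitClosedBall_eq_norm {E : Type*} [NormedAddCommGroup E]
    [NormedSpace ℝ E] (x : E) :
    sSup ((fun f : StrongDual ℝ E => f x) '' closedBall 0 1) = ‖x‖ := by
  rw [← (inclusionInDoubleDualLi ℝ (E := E)).norm_map x,
    ← ContinuousLinearMap.sSup_image_unitClosedBall_eq_norm]
  rfl

section Antinorm

variable {X : Type*} [NormedAddCommGroup X] [NormedSpace ℝ X] [FiniteDimensional ℝ X]
  {ω : X →ₗ[ℝ] X →ₗ[ℝ] ℝ}

theorem antinorm_eq_norm_toContinuousLinearMap (hω : ω.IsAlt) (y : X) :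
    antinorm ω y = ‖LinearMap.toContinuousLinearMap (ω y)‖ := by
  have hflip : ω.flip y = -ω y := LinearMap.ext fun x => (hω.neg y x).symm
  rw [← norm_neg, ← map_neg, ← hflip,
    ← ContinuousLinearMap.sSup_image_unitClosedBall_eq_norm, antinorm]
  simp only [← mem_closedBall_zero_iff, Set.ofPred_mem_eq]
  rfl

theorem LinearMap.SeparatingLeft.surjective_toContinuousLinearMap (hω : ω.SeparatingLeft) :
    Function.Surjective fun y => LinearMap.toContinuousLinearMap (ω y) := by
  have hinj : Function.Injective ω :=
    LinearMap.ker_eq_bot.1 (LinearMap.separatingLeft_iff_ker_eq_bot.1 hω)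
  have hsurj : Function.Surjective ω :=
    (LinearMap.injective_iff_surjective_of_finrank_eq_finrank
      Subspace.dual_finrank_eq.symm).1 hinj
  exact LinearMap.toContinuousLinearMap.surjective.comp hsurj

end Antinorm

/-- The anti-norm of the anti-norm is the original norm. -/
theorem antinorm_antinorm {X : Type*} [NormedAddCommGroup X] [NormedSpace ℝ X]
    (hdim : Module.finrank ℝ X = 2)
    (ω : X →ₗ[ℝ] X →ₗ[ℝ] ℝ)
    (halt : ∀ x : X, ω x x = 0)
    (hnd : ∀ x : X, (∀ y : X, ω x y = 0) → x = 0) :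
    ∀ x : X, ‖x‖ = sSup ((fun y => ω y x) '' {y : X | antinorm ω y ≤ 1}) := by
  have : FiniteDimensional ℝ X := .of_finrank_eq_succ hdim
  have hsurj := LinearMap.SeparatingLeft.surjective_toContinuousLinearMap hnd
  intro x
  rw [← NormedSpace.sSup_apply_dual_unitClosedBall_eq_norm x,
    ← hsurj.image_preimage (closedBall 0 1), Set.image_image]
  simp only [Set.preimage, mem_closedBall_zero_iff, antinorm_eq_norm_toContinuousLinearMap halt,
    LinearMap.coe_toContinuousLinearMap']
end

section
/- A two-dimensional normed plane is a Radon plane (Birkhoff orthogonality is symmetric) if and only if its anti-norm is a positive scalar multiple of its norm. -/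
/-- Birkhoff orthogonality: `v ⊣_B w`. -/
def Birkhoff {X : Type*} [NormedAddCommGroup X] [NormedSpace ℝ X] (v w : X) : Prop :=
  ∀ l : ℝ, ‖v‖ ≤ ‖v + l • w‖

/-!
In the plane, `|ω(x, y)| ≤ ‖x‖ ‖y‖ₐ` always holds, and `v ⊣_B w` holds exactly when it is an
equality for `x = v`, `y = w`: every `x` is `a v + b w`, `ω(x, w) = a ω(v, w)` and `‖x‖ ≥ |a| ‖v‖`.
So if `‖·‖ₐ = c ‖·‖`, Birkhoff orthogonality is visibly symmetric.

Conversely, in a Radon plane `‖v‖ ‖w‖ₐ = |ω(v, w)| = ‖w‖ ‖v‖ₐ` whenever `v ⊣_B w`. Writing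
`u θ = cos θ e₀ + sin θ e₁` with `ω(e₀, e₁) = 1`, this says that the unit circles of the norm and of
the anti-norm, the polar curves `θ ↦ u θ / ‖u θ‖` and `θ ↦ u θ / ‖u θ‖ₐ`, have parallel supporting
lines at every angle `θ`. The largest common supporting direction `φ θ` is right-continuous in `θ`,
and both radial functions then have the same logarithmic right derivative `-cot (θ - φ θ)`, so their
ratio is constant.
-/

open Real Set Filter Topology

section Antinorm

variable {X : Type*} [NormedAddCommGroup X] [NormedSpace ℝ X] [FiniteDimensional ℝ X]
  (ω : X →ₗ[ℝ] X →ₗ[ℝ] ℝ)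

noncomputable def flipDual : X →ₗ[ℝ] StrongDual ℝ X :=
  LinearMap.toContinuousLinearMap.toLinearMap ∘ₗ ω.flip

@[simp]
lemma flipDual_apply (y x : X) : flipDual ω y x = ω x y := rfl

lemma antinorm_eq_norm_flipDual (y : X) : antinorm ω y = ‖flipDual ω y‖ := by
  have hle : ∀ x ∈ {x : X | ‖x‖ ≤ 1}, ω x y ≤ ‖flipDual ω y‖ := fun x hx =>
    (le_abs_self _).trans ((flipDual ω y).unit_le_opNorm x hx)
  have hbdd : BddAbove ((fun x => ω x y) '' {x : X | ‖x‖ ≤ 1}) := ⟨_, forall_mem_image.2 hle⟩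
  refine le_antisymm (csSup_le ⟨0, 0, by simp, by simp⟩ (forall_mem_image.2 hle)) ?_
  rw [← (flipDual ω y).sSup_unitClosedBall_eq_norm]
  refine csSup_le ⟨_, 0, by simp, rfl⟩ (forall_mem_image.2 fun x hx => ?_)
  rcases abs_choice (ω x y) with h | h
  · exact le_csSup hbdd ⟨x, by simpa using hx, by simp [h]⟩
  · exact le_csSup hbdd ⟨-x, by simpa using hx, by simp [h]⟩

lemma abs_le_norm_mul_antinorm (x y : X) : |ω x y| ≤ ‖x‖ * antinorm ω y := by
  rw [antinorm_eq_norm_flipDual, mul_comm]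
  exact (flipDual ω y).le_opNorm x

lemma antinorm_le_of_abs_apply_le {y : X} {C : ℝ} (hC : 0 ≤ C) (h : ∀ x, |ω x y| ≤ C * ‖x‖) :
    antinorm ω y ≤ C := by
  rw [antinorm_eq_norm_flipDual]
  exact (flipDual ω y).opNorm_le_bound hC h

lemma antinorm_smul (c : ℝ) (y : X) : antinorm ω (c • y) = |c| * antinorm ω y := by
  rw [antinorm_eq_norm_flipDual, antinorm_eq_norm_flipDual, map_smul, norm_smul, norm_eq_abs]

lemma antinorm_zero : antinorm ω 0 = 0 := by
  simpa using antinorm_smul ω 0 0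

lemma continuous_antinorm : Continuous (antinorm ω) := by
  simpa only [funext (antinorm_eq_norm_flipDual ω)] using
    (LinearMap.continuous_of_finiteDimensional (flipDual ω)).norm

lemma antinorm_pos (hω : ω.SeparatingRight) {y : X} (hy : y ≠ 0) : 0 < antinorm ω y := by
  rw [antinorm_eq_norm_flipDual, norm_pos_iff]
  exact fun h => hy (hω y fun x => by simpa using DFunLike.congr_fun h x)

end Antinorm

section Birkhoff

variable {X : Type*} [NormedAddCommGroup X] [NormedSpace ℝ X]

lemma Birkhoff.smul_right {v w : X} (h : Birkhoff v w) (s : ℝ) : Birkhoff v (s • w) := by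
  intro l
  simpa [smul_smul] using h (l * s)

lemma Birkhoff.of_smul_right {v w : X} {s : ℝ} (h : Birkhoff v (s • w)) (hs : s ≠ 0) :
    Birkhoff v w := by
  simpa [smul_smul, hs] using h.smul_right s⁻¹

lemma not_birkhoff_smul_self {v : X} (hv : v ≠ 0) {c : ℝ} (hc : c ≠ 0) : ¬ Birkhoff v (c • v) := by
  intro h
  simpa [smul_smul, hc, hv] using h (-c⁻¹)

lemma Birkhoff.abs_mul_norm_le {v w : X} (h : Birkhoff v w) (a b : ℝ) :
    |a| * ‖v‖ ≤ ‖a • v + b • w‖ := by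
  rcases eq_or_ne a 0 with rfl | ha
  · simp
  calc |a| * ‖v‖ ≤ |a| * ‖v + (a⁻¹ * b) • w‖ := by gcongr; exact h _
    _ = ‖a • v + b • w‖ := by
      rw [← norm_eq_abs, ← norm_smul, smul_add, smul_smul, mul_inv_cancel_left₀ ha]

lemma Birkhoff.linearIndependent {v w : X} (h : Birkhoff v w) (hv : v ≠ 0) (hw : w ≠ 0) :
    LinearIndependent ℝ ![v, w] := by
  refine (LinearIndependent.pair_iff' hv).2 fun a hav => ?_
  have ha : a ≠ 0 := by rintro rfl; exact hw (by simpa using hav.symm)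
  exact not_birkhoff_smul_self hv ha (hav ▸ h)

lemma exists_birkhoff [FiniteDimensional ℝ X] (hdim : Module.finrank ℝ X = 2) {v : X}
    (hv : v ≠ 0) : ∃ w, w ≠ 0 ∧ Birkhoff v w := by
  obtain ⟨g, hg, hgv⟩ := exists_dual_vector ℝ v (norm_ne_zero_iff.2 hv)
  obtain ⟨w, hw, hw0⟩ := Submodule.exists_mem_ne_zero_of_ne_bot
    ((g : X →ₗ[ℝ] ℝ).ker_ne_bot_of_finrank_lt (by simp [hdim]))
  refine ⟨w, hw0, fun l => ?_⟩
  have hgw : g w = 0 := hw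
  calc ‖v‖ = g (v + l • w) := by simp [hgv, hgw]
    _ ≤ ‖g‖ * ‖v + l • w‖ := (le_abs_self _).trans (g.le_opNorm _)
    _ = ‖v + l • w‖ := by rw [hg, one_mul]

lemma exists_smul_add_smul_eq [FiniteDimensional ℝ X] (hdim : Module.finrank ℝ X = 2) {v w : X}
    (hvw : LinearIndependent ℝ ![v, w]) (x : X) : ∃ a b : ℝ, a • v + b • w = x := by
  have hspan := hvw.span_eq_top_of_card_eq_finrank' (by simp [hdim])
  rw [Matrix.range_cons, Matrix.range_cons, Matrix.range_empty, union_empty,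
    singleton_union] at hspan
  exact Submodule.mem_span_pair.1 (hspan ▸ Submodule.mem_top)

variable [FiniteDimensional ℝ X] (ω : X →ₗ[ℝ] X →ₗ[ℝ] ℝ)

lemma Birkhoff.abs_apply_eq (hdim : Module.finrank ℝ X = 2) (halt : ω.IsAlt) {v w : X}
    (h : Birkhoff v w) : |ω v w| = ‖v‖ * antinorm ω w := by
  rcases eq_or_ne w 0 with rfl | hw
  · simp [antinorm_zero]
  rcases eq_or_ne v 0 with rfl | hv
  · simp
  have hv' : 0 < ‖v‖ := norm_pos_iff.2 hv
  refine le_antisymm (abs_le_norm_mul_antinorm ω v w) ?_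
  rw [← le_div_iff₀' hv']
  refine antinorm_le_of_abs_apply_le ω (by positivity) fun x => ?_
  obtain ⟨a, b, rfl⟩ := exists_smul_add_smul_eq hdim (h.linearIndependent hv hw) x
  have hx : ω (a • v + b • w) w = a * ω v w := by simp [halt.self_eq_zero]
  rw [hx, abs_mul, div_mul_eq_mul_div, le_div_iff₀ hv']
  calc |a| * |ω v w| * ‖v‖ = |a| * ‖v‖ * |ω v w| := mul_right_comm _ _ _
    _ ≤ ‖a • v + b • w‖ * |ω v w| := by gcongr; exact h.abs_mul_norm_le a b
    _ = |ω v w| * ‖a • v + b • w‖ := mul_comm _ _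

lemma birkhoff_of_abs_apply_eq (halt : ω.IsAlt) {v w : X} (hw : 0 < antinorm ω w)
    (h : |ω v w| = ‖v‖ * antinorm ω w) : Birkhoff v w := by
  intro l
  refine le_of_mul_le_mul_right ?_ hw
  calc ‖v‖ * antinorm ω w = |ω (v + l • w) w| := by
        simp [← h, halt.self_eq_zero]
    _ ≤ ‖v + l • w‖ * antinorm ω w := abs_le_norm_mul_antinorm ω _ w

end Birkhoff

/-- The polar curve `ψ ↦ f ψ • (cos ψ, sin ψ)` has at its point of angle `θ` a supporting line in
the direction `(cos φ, sin φ)`: that point maximises the cross product with `(cos φ, sin φ)`. -/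
def IsSupportAngle (f : ℝ → ℝ) (θ φ : ℝ) : Prop :=
  ∀ ψ, f ψ * sin (ψ - φ) ≤ f θ * sin (θ - φ)

lemma IsSupportAngle.of_tendsto {f : ℝ → ℝ} (hf : Continuous f) {α : Type*} {l : Filter α}
    [l.NeBot] {s t : α → ℝ} {θ φ : ℝ} (hs : Tendsto s l (𝓝 θ)) (ht : Tendsto t l (𝓝 φ))
    (h : ∀ᶠ a in l, IsSupportAngle f (s a) (t a)) : IsSupportAngle f θ φ := fun ψ =>
  le_of_tendsto_of_tendsto
    (tendsto_const_nhds.mul ((continuous_sin.tendsto _).comp (tendsto_const_nhds.sub ht)))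
    (((hf.tendsto _).comp hs).mul ((continuous_sin.tendsto _).comp (hs.sub ht)))
    (h.mono fun _ ha => ha ψ)

lemma isClosed_setOf_isSupportAngle (f : ℝ → ℝ) (θ : ℝ) :
    IsClosed {φ | IsSupportAngle f θ φ} := by
  simp only [IsSupportAngle, ofPred_forall]
  exact isClosed_iInter fun ψ => isClosed_le (by fun_prop) (by fun_prop)

lemma isSupportAngle_inv {F : ℝ → ℝ} {θ φ K : ℝ} (hF : ∀ ψ, 0 < F ψ)
    (hle : ∀ ψ, sin (ψ - φ) ≤ F ψ * K) (heq : sin (θ - φ) = F θ * K) :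
    IsSupportAngle (fun ψ => (F ψ)⁻¹) θ φ := by
  intro ψ
  rw [heq, inv_mul_cancel_left₀ (hF θ).ne']
  exact (inv_mul_le_iff₀ (hF ψ)).2 (hle ψ)

lemma not_isSupportAngle_self {f : ℝ → ℝ} (hf : ∀ x, 0 < f x) (θ : ℝ) : ¬ IsSupportAngle f θ θ := by
  intro h
  have := h (θ + π / 2)
  rw [add_sub_cancel_left, sin_pi_div_two, sub_self, sin_zero] at this
  linarith [hf (θ + π / 2)]

lemma not_isSupportAngle_sub_pi {f : ℝ → ℝ} (hf : ∀ x, 0 < f x) (θ : ℝ) :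
    ¬ IsSupportAngle f θ (θ - π) := by
  intro h
  have := h (θ - π / 2)
  rw [show θ - π / 2 - (θ - π) = π / 2 by ring, sin_pi_div_two, sub_sub_cancel, sin_pi] at this
  linarith [hf (θ - π / 2)]

lemma IsSupportAngle.log_add_log_sin_le {f : ℝ → ℝ} (hf : ∀ x, 0 < f x) {θ φ ψ : ℝ}
    (h : IsSupportAngle f θ φ) (hθ : 0 < sin (θ - φ)) (hψ : 0 < sin (ψ - φ)) :
    log (f ψ) + log (sin (ψ - φ)) ≤ log (f θ) + log (sin (θ - φ)) := by
  rw [← log_mul (hf ψ).ne' hψ.ne', ← log_mul (hf θ).ne' hθ.ne']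
  exact log_le_log (mul_pos (hf ψ) hψ) (h ψ)

lemma IsSupportAngle.le {f : ℝ → ℝ} (hf : ∀ x, 0 < f x) {θ θ' φ φ' : ℝ}
    (hθθ' : θ < θ') (hφ : φ ∈ Ioo (θ - π) θ) (hφ' : φ' ∈ Ioo (θ' - π) θ')
    (h : IsSupportAngle f θ φ) (h' : IsSupportAngle f θ' φ') : φ ≤ φ' := by
  obtain ⟨hφ₁, hφ₂⟩ := hφ
  obtain ⟨hφ'₁, hφ'₂⟩ := hφ'
  by_contra! hlt
  have hθ'θ : θ' < θ + π := by linarith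
  have s₁ : 0 < sin (θ - φ') := sin_pos_of_pos_of_lt_pi (by linarith) (by linarith)
  have s₃ : 0 < sin (θ' - θ) := sin_pos_of_pos_of_lt_pi (by linarith) (by linarith)
  have s₄ : 0 < sin (φ - φ') := sin_pos_of_pos_of_lt_pi (by linarith) (by linarith)
  have s₅ : 0 < sin (θ - φ) := sin_pos_of_pos_of_lt_pi (by linarith) (by linarith)
  have hprod : sin (θ - φ') * sin (θ' - φ) ≤ sin (θ - φ) * sin (θ' - φ') := by
    refine le_of_mul_le_mul_left ?_ (mul_pos (hf θ) (hf θ'))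
    have := mul_le_mul (h θ') (h' θ) (mul_pos (hf θ) s₁).le (mul_pos (hf θ) s₅).le
    linarith
  have hid : sin (θ - φ) * sin (θ' - φ') - sin (θ - φ') * sin (θ' - φ)
      = - (sin (θ' - θ) * sin (φ - φ')) := by
    simp only [sin_sub]
    ring
  linarith [mul_pos s₃ s₄]

lemma log_sin_le_add_mul_cot {a b : ℝ} (ha : 0 < a) (hab : a ≤ b) (hb : b < π) :
    log (sin b) ≤ log (sin a) + (b - a) * (cos a / sin a) := by
  have hsa : 0 < sin a := sin_pos_of_pos_of_lt_pi ha (by linarith)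
  have hsb : 0 < sin b := sin_pos_of_pos_of_lt_pi (by linarith) hb
  have htangent : sin b ≤ sin a + (b - a) * cos a := by
    rcases hab.eq_or_lt with rfl | hlt
    · simp
    have := strictConcaveOn_sin_Icc.concaveOn.slope_le_of_hasDerivAt ⟨ha.le, by linarith⟩
      ⟨by linarith, hb.le⟩ hlt (hasDerivAt_sin a)
    rw [slope_def_field, div_le_iff₀ (by linarith)] at this
    linarith
  rw [← sub_le_iff_le_add']
  calc log (sin b) - log (sin a) ≤ sin b / sin a - 1 := by
        rw [← log_div hsb.ne' hsa.ne']; exact log_le_sub_one_of_pos (div_pos hsb hsa)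
    _ ≤ (b - a) * (cos a / sin a) := by
        rw [sub_le_iff_le_add, div_le_iff₀ hsa]
        field_simp
        linarith

section MaxSupportAngle

variable {f₁ f₂ : ℝ → ℝ}

def commonSupportAngles (f₁ f₂ : ℝ → ℝ) (θ : ℝ) : Set ℝ :=
  Icc (θ - π) θ ∩ {φ | IsSupportAngle f₁ θ φ ∧ IsSupportAngle f₂ θ φ}

lemma isCompact_commonSupportAngles (f₁ f₂ : ℝ → ℝ) (θ : ℝ) :
    IsCompact (commonSupportAngles f₁ f₂ θ) :=
  isCompact_Icc.inter_right
    ((isClosed_setOf_isSupportAngle f₁ θ).inter (isClosed_setOf_isSupportAngle f₂ θ))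

noncomputable def maxSupportAngle (f₁ f₂ : ℝ → ℝ) (θ : ℝ) : ℝ :=
  sSup (commonSupportAngles f₁ f₂ θ)

lemma le_maxSupportAngle {θ φ : ℝ} (hφ : φ ∈ commonSupportAngles f₁ f₂ θ) :
    φ ≤ maxSupportAngle f₁ f₂ θ :=
  le_csSup (isCompact_commonSupportAngles f₁ f₂ θ).bddAbove hφ

lemma maxSupportAngle_mem (hne : ∀ θ, (commonSupportAngles f₁ f₂ θ).Nonempty) (θ : ℝ) :
    maxSupportAngle f₁ f₂ θ ∈ commonSupportAngles f₁ f₂ θ :=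
  (isCompact_commonSupportAngles f₁ f₂ θ).sSup_mem (hne θ)

lemma maxSupportAngle_mem_Ioo (hne : ∀ θ, (commonSupportAngles f₁ f₂ θ).Nonempty)
    (hf₁ : ∀ x, 0 < f₁ x) (θ : ℝ) : maxSupportAngle f₁ f₂ θ ∈ Ioo (θ - π) θ := by
  obtain ⟨⟨h₁, h₂⟩, h, -⟩ := maxSupportAngle_mem hne θ
  exact ⟨h₁.lt_of_ne fun hφ => not_isSupportAngle_sub_pi hf₁ θ (hφ ▸ h),
    h₂.lt_of_ne fun hφ => not_isSupportAngle_self hf₁ θ (by rwa [hφ] at h)⟩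

lemma monotone_maxSupportAngle (hne : ∀ θ, (commonSupportAngles f₁ f₂ θ).Nonempty)
    (hf₁ : ∀ x, 0 < f₁ x) : Monotone (maxSupportAngle f₁ f₂) := by
  intro θ θ' hθθ'
  rcases hθθ'.eq_or_lt with rfl | hlt
  · rfl
  exact IsSupportAngle.le hf₁ hlt (maxSupportAngle_mem_Ioo hne hf₁ θ)
    (maxSupportAngle_mem_Ioo hne hf₁ θ') (maxSupportAngle_mem hne θ).2.1
    (maxSupportAngle_mem hne θ').2.1

/-- Right-continuity comes from maximality: the right limit is again a common support angle. -/
lemma tendsto_maxSupportAngle_nhdsGT (hne : ∀ θ, (commonSupportAngles f₁ f₂ θ).Nonempty)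
    (hf₁ : ∀ x, 0 < f₁ x) (hc₁ : Continuous f₁) (hc₂ : Continuous f₂) (θ : ℝ) :
    Tendsto (maxSupportAngle f₁ f₂) (𝓝[>] θ) (𝓝 (maxSupportAngle f₁ f₂ θ)) := by
  set m := maxSupportAngle f₁ f₂
  have hm := maxSupportAngle_mem_Ioo hne hf₁
  have hmono := monotone_maxSupportAngle hne hf₁
  have hL := hmono.tendsto_nhdsGT θ
  set L := sInf (m '' Ioi θ)
  have hθ : Tendsto id (𝓝[>] θ) (𝓝 θ) := tendsto_nhdsWithin_of_tendsto_nhds tendsto_id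
  have hmL : m θ ≤ L :=
    ge_of_tendsto hL (eventually_nhdsWithin_of_forall fun ψ hψ => hmono hψ.le)
  have hLθ : L ≤ θ := le_of_tendsto_of_tendsto' hL hθ fun ψ => (hm ψ).2.le
  have hsupp := fun ψ => (maxSupportAngle_mem hne ψ).2
  have hLmem : L ∈ commonSupportAngles f₁ f₂ θ :=
    ⟨⟨by linarith [(hm θ).1], hLθ⟩,
      .of_tendsto hc₁ hθ hL (.of_forall fun ψ => (hsupp ψ).1),
      .of_tendsto hc₂ hθ hL (.of_forall fun ψ => (hsupp ψ).2)⟩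
  rwa [le_antisymm (le_maxSupportAngle hLmem) hmL] at hL

end MaxSupportAngle

lemma hasDerivAt_log_sin_sub {φ x : ℝ} (hx : sin (x - φ) ≠ 0) :
    HasDerivAt (fun y => log (sin (y - φ))) (cos (x - φ) / sin (x - φ)) x := by
  simpa using (((hasDerivAt_id' x).sub_const φ).sin).log hx

/-- The support inequality at `θ` bounds the right difference quotients of `log ∘ f` from above,
the one at the moving point `ψ` bounds them from below by `-cot (θ - m ψ)`. -/
lemma hasDerivWithinAt_log_of_isSupportAngle {f m : ℝ → ℝ} {θ : ℝ} (hf : ∀ x, 0 < f x)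
    (hm : ∀ x, m x ∈ Ioo (x - π) x) (hmθ : Tendsto m (𝓝[>] θ) (𝓝 (m θ)))
    (hsupp : ∀ x, IsSupportAngle f x (m x)) :
    HasDerivWithinAt (fun x => log (f x)) (-(cos (θ - m θ) / sin (θ - m θ))) (Ici θ) θ := by
  set φ := m θ
  obtain ⟨hφ₁, hφ₂⟩ := hm θ
  have hsin : 0 < sin (θ - φ) := sin_pos_of_pos_of_lt_pi (by linarith) (by linarith)
  rw [hasDerivWithinAt_iff_tendsto_slope, Ici_sdiff_left]
  have hcot : ContinuousAt (fun a => -(cos (θ - a) / sin (θ - a))) φ := by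
    fun_prop (disch := exact hsin.ne')
  have hupper := ((hasDerivAt_iff_tendsto_slope.1 (hasDerivAt_log_sin_sub hsin.ne')).mono_left
    (nhdsWithin_mono θ fun _ h => ne_of_gt h)).neg
  refine tendsto_of_tendsto_of_tendsto_of_le_of_le' (hcot.tendsto.comp hmθ) hupper ?_ ?_
  · filter_upwards [self_mem_nhdsWithin, hmθ.eventually (gt_mem_nhds hφ₂)] with ψ (hψ : θ < ψ) hmψ
    obtain ⟨hmψ₁, -⟩ := hm ψ
    have h₁ : 0 < sin (θ - m ψ) := sin_pos_of_pos_of_lt_pi (by linarith) (by linarith)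
    have h₂ : 0 < sin (ψ - m ψ) := sin_pos_of_pos_of_lt_pi (by linarith) (by linarith)
    have hs := (hsupp ψ).log_add_log_sin_le hf h₂ h₁
    have ht := log_sin_le_add_mul_cot (a := θ - m ψ) (b := ψ - m ψ) (by linarith) (by linarith)
      (by linarith)
    rw [slope_def_field, le_div_iff₀ (by linarith), Function.comp_apply]
    linarith
  · filter_upwards [Ioo_mem_nhdsGT (show θ < φ + π by linarith)] with ψ ⟨hψ₁, hψ₂⟩
    have hs := (hsupp θ).log_add_log_sin_le hf hsin
      (sin_pos_of_pos_of_lt_pi (by linarith) (by linarith) : 0 < sin (ψ - φ))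
    rw [slope_def_field, slope_def_field, ← neg_div, div_le_div_iff_of_pos_right (by linarith)]
    linarith

lemma eq_of_forall_hasDerivWithinAt_Ici_zero {D : ℝ → ℝ} (hD : Continuous D)
    (hD' : ∀ x, HasDerivWithinAt D 0 (Ici x) x) (a b : ℝ) : D a = D b := by
  wlog hab : a ≤ b generalizing a b
  · exact (this b a (le_of_not_ge hab)).symm
  exact (constant_of_has_deriv_right_zero hD.continuousOn (fun x _ => hD' x) b ⟨hab, le_rfl⟩).symm

/-- Two star-shaped curves `ψ ↦ f₁ ψ • (cos ψ, sin ψ)` and `ψ ↦ f₂ ψ • (cos ψ, sin ψ)` that have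
parallel supporting lines along every ray are homothetic. -/
theorem exists_eq_mul_of_commonSupportAngles_nonempty {f₁ f₂ : ℝ → ℝ} (hc₁ : Continuous f₁)
    (hc₂ : Continuous f₂) (hf₁ : ∀ x, 0 < f₁ x) (hf₂ : ∀ x, 0 < f₂ x)
    (hne : ∀ θ, (commonSupportAngles f₁ f₂ θ).Nonempty) : ∃ c, ∀ θ, f₁ θ = c * f₂ θ := by
  set D := fun x => log (f₁ x) - log (f₂ x)
  have hm := maxSupportAngle_mem_Ioo hne hf₁
  have hmθ := tendsto_maxSupportAngle_nhdsGT hne hf₁ hc₁ hc₂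
  have hsupp := fun ψ => (maxSupportAngle_mem hne ψ).2
  have hD' (θ : ℝ) : HasDerivWithinAt D 0 (Ici θ) θ :=
    ((hasDerivWithinAt_log_of_isSupportAngle hf₁ hm (hmθ θ) fun x => (hsupp x).1).sub
      (hasDerivWithinAt_log_of_isSupportAngle hf₂ hm (hmθ θ) fun x => (hsupp x).2)).congr_deriv
      (sub_self _)
  have hD : Continuous D :=
    (hc₁.log fun x => (hf₁ x).ne').sub (hc₂.log fun x => (hf₂ x).ne')
  refine ⟨exp (D 0), fun θ => ?_⟩
  rw [eq_of_forall_hasDerivWithinAt_Ici_zero hD hD' 0 θ, exp_sub, exp_log (hf₁ θ),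
    exp_log (hf₂ θ), div_mul_cancel₀ _ (hf₂ θ).ne']

section AngleVec

variable {X : Type*} [AddCommGroup X] [Module ℝ X]

noncomputable def angleVec (e₀ e₁ : X) (θ : ℝ) : X := cos θ • e₀ + sin θ • e₁

lemma exists_smul_angleVec_eq (e₀ e₁ : X) (a b : ℝ) :
    ∃ R θ : ℝ, R • angleVec e₀ e₁ θ = a • e₀ + b • e₁ := by
  refine ⟨‖(⟨a, b⟩ : ℂ)‖, Complex.arg ⟨a, b⟩, ?_⟩
  rw [angleVec, smul_add, smul_smul, smul_smul, Complex.norm_mul_cos_arg,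
    Complex.norm_mul_sin_arg]

lemma angleVec_add_int_mul_pi (e₀ e₁ : X) (θ : ℝ) (n : ℤ) :
    angleVec e₀ e₁ (θ + n * π) = ((-1 : ℝ) ^ n) • angleVec e₀ e₁ θ := by
  simp only [angleVec, cos_add_int_mul_pi, sin_add_int_mul_pi, smul_add, smul_smul]

variable {ω : X →ₗ[ℝ] X →ₗ[ℝ] ℝ}

lemma exists_apply_eq_one (hdim : Module.finrank ℝ X = 2) (hnd : ω.SeparatingLeft) :
    ∃ e₀ e₁ : X, ω e₀ e₁ = 1 := by
  have : Nontrivial X := Module.nontrivial_of_finrank_eq_succ hdim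
  obtain ⟨e₀, he₀⟩ := exists_ne (0 : X)
  obtain ⟨y, hy⟩ : ∃ y, ω e₀ y ≠ 0 := by
    by_contra! h
    exact he₀ (hnd e₀ h)
  exact ⟨e₀, (ω e₀ y)⁻¹ • y, by simp [hy]⟩

variable {e₀ e₁ : X}

lemma apply_angleVec_angleVec (halt : ω.IsAlt) (he : ω e₀ e₁ = 1) (α β : ℝ) :
    ω (angleVec e₀ e₁ α) (angleVec e₀ e₁ β) = sin (β - α) := by
  have he' : ω e₁ e₀ = -1 := by rw [← halt.neg, he]
  simp only [angleVec, map_add, map_smul, LinearMap.add_apply, LinearMap.smul_apply, smul_eq_mul,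
    halt.self_eq_zero, he, he', sin_sub]
  ring

lemma angleVec_ne_zero (halt : ω.IsAlt) (he : ω e₀ e₁ = 1) (θ : ℝ) : angleVec e₀ e₁ θ ≠ 0 := by
  intro h
  simpa [h] using apply_angleVec_angleVec halt he θ (θ + π / 2)

lemma linearIndependent_of_apply_eq_one (halt : ω.IsAlt) (he : ω e₀ e₁ = 1) :
    LinearIndependent ℝ ![e₀, e₁] := by
  refine LinearIndependent.pair_iff.2 fun s t hst => ⟨?_, ?_⟩
  · simpa [halt.self_eq_zero, he] using congr_arg (fun x => ω x e₁) hst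
  · simpa [halt.self_eq_zero, he] using congr_arg (ω e₀) hst

end AngleVec

section RadonPlane

def IsRadonPlane (X : Type*) [NormedAddCommGroup X] [NormedSpace ℝ X] : Prop :=
  ∀ v w : X, Birkhoff v w → Birkhoff w v

variable {X : Type*} [NormedAddCommGroup X] [NormedSpace ℝ X] [FiniteDimensional ℝ X]
  {ω : X →ₗ[ℝ] X →ₗ[ℝ] ℝ} {e₀ e₁ : X}

lemma exists_eq_smul_angleVec (hdim : Module.finrank ℝ X = 2) (halt : ω.IsAlt)
    (he : ω e₀ e₁ = 1) (y : X) : ∃ R θ : ℝ, y = R • angleVec e₀ e₁ θ := by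
  obtain ⟨a, b, rfl⟩ :=
    exists_smul_add_smul_eq hdim (linearIndependent_of_apply_eq_one halt he) y
  obtain ⟨R, θ, h⟩ := exists_smul_angleVec_eq e₀ e₁ a b
  exact ⟨R, θ, h.symm⟩

lemma exists_birkhoff_angleVec (hdim : Module.finrank ℝ X = 2) (halt : ω.IsAlt)
    (he : ω e₀ e₁ = 1) (θ : ℝ) :
    ∃ φ ∈ Ioo (θ - π) θ, Birkhoff (angleVec e₀ e₁ θ) (angleVec e₀ e₁ φ) := by
  have hu := angleVec_ne_zero halt he
  obtain ⟨w, hw, hB⟩ := exists_birkhoff hdim (hu θ)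
  obtain ⟨R, φ₀, rfl⟩ := exists_eq_smul_angleVec hdim halt he w
  have hR : R ≠ 0 := by rintro rfl; simp at hw
  obtain ⟨φ, ⟨h₁, h₂⟩, n, rfl⟩ : ∃ φ ∈ Ico (θ - π) (θ - π + π), ∃ n : ℤ, φ₀ = φ + n * π :=
    ⟨_, toIcoMod_mem_Ico pi_pos _ φ₀, toIcoDiv pi_pos (θ - π) φ₀,
      by rw [← self_sub_toIcoDiv_zsmul, zsmul_eq_mul, sub_add_cancel]⟩
  rw [angleVec_add_int_mul_pi, smul_smul] at hB
  have hB' := hB.of_smul_right (mul_ne_zero hR (zpow_ne_zero _ (by norm_num)))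
  refine ⟨φ, ⟨h₁.lt_of_ne ?_, by linarith⟩, hB'⟩
  rintro rfl
  have h := angleVec_add_int_mul_pi e₀ e₁ (θ - π) 1
  rw [Int.cast_one, one_mul, sub_add_cancel, zpow_one, neg_one_smul] at h
  rw [← neg_neg (angleVec e₀ e₁ (θ - π)), ← h, ← neg_one_smul ℝ] at hB'
  exact not_birkhoff_smul_self (hu θ) (by norm_num) hB'

lemma IsRadonPlane.nonempty_commonSupportAngles (hradon : IsRadonPlane X)
    (hdim : Module.finrank ℝ X = 2) (halt : ω.IsAlt) (hsep : ω.SeparatingRight)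
    (he : ω e₀ e₁ = 1) (θ : ℝ) :
    (commonSupportAngles (fun ψ => ‖angleVec e₀ e₁ ψ‖⁻¹)
      (fun ψ => (antinorm ω (angleVec e₀ e₁ ψ))⁻¹) θ).Nonempty := by
  set u := angleVec e₀ e₁
  have hu := angleVec_ne_zero halt he
  obtain ⟨φ, hφ, hB⟩ := exists_birkhoff_angleVec hdim halt he θ
  have hsin : 0 < sin (θ - φ) := sin_pos_of_pos_of_lt_pi (by linarith [hφ.2]) (by linarith [hφ.1])
  have h₁ := hB.abs_apply_eq ω hdim halt
  have h₂ := (hradon _ _ hB).abs_apply_eq ω hdim halt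
  rw [apply_angleVec_angleVec halt he, ← neg_sub, sin_neg, abs_neg, abs_of_pos hsin] at h₁
  rw [apply_angleVec_angleVec halt he, abs_of_pos hsin, mul_comm] at h₂
  refine ⟨φ, ⟨hφ.1.le, hφ.2.le⟩,
    isSupportAngle_inv (fun ψ => norm_pos_iff.2 (hu ψ)) (fun ψ => ?_) h₁,
    isSupportAngle_inv (fun ψ => antinorm_pos ω hsep (hu ψ)) (fun ψ => ?_) h₂⟩
  · calc sin (ψ - φ) = -ω (u ψ) (u φ) := by
          rw [apply_angleVec_angleVec halt he, ← sin_neg, neg_sub]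
      _ ≤ ‖u ψ‖ * antinorm ω (u φ) := (neg_le_abs _).trans (abs_le_norm_mul_antinorm ω _ _)
  · calc sin (ψ - φ) = ω (u φ) (u ψ) := (apply_angleVec_angleVec halt he _ _).symm
      _ ≤ antinorm ω (u ψ) * ‖u φ‖ :=
        (le_abs_self _).trans ((abs_le_norm_mul_antinorm ω _ _).trans_eq (mul_comm _ _))

lemma IsRadonPlane.exists_antinorm_angleVec_eq (hradon : IsRadonPlane X)
    (hdim : Module.finrank ℝ X = 2) (halt : ω.IsAlt) (hsep : ω.SeparatingRight)
    (he : ω e₀ e₁ = 1) :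
    ∃ c, 0 < c ∧ ∀ θ, antinorm ω (angleVec e₀ e₁ θ) = c * ‖angleVec e₀ e₁ θ‖ := by
  have hu := angleVec_ne_zero halt he
  have hcont : Continuous (angleVec e₀ e₁) := by unfold angleVec; fun_prop
  have hnorm (ψ : ℝ) : 0 < ‖angleVec e₀ e₁ ψ‖ := norm_pos_iff.2 (hu ψ)
  have hanti (ψ : ℝ) : 0 < antinorm ω (angleVec e₀ e₁ ψ) := antinorm_pos ω hsep (hu ψ)
  obtain ⟨c, hc⟩ := exists_eq_mul_of_commonSupportAngles_nonempty
    (hcont.norm.inv₀ fun ψ => (hnorm ψ).ne')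
    (((continuous_antinorm ω).comp hcont).inv₀ fun ψ => (hanti ψ).ne')
    (fun ψ => inv_pos.2 (hnorm ψ)) (fun ψ => inv_pos.2 (hanti ψ))
    (hradon.nonempty_commonSupportAngles hdim halt hsep he)
  have hc' (θ : ℝ) : antinorm ω (angleVec e₀ e₁ θ) = c * ‖angleVec e₀ e₁ θ‖ := by
    have := hc θ
    simp only [Pi.inv_apply, Function.comp_apply] at this
    rwa [← div_eq_mul_inv, inv_eq_one_div, div_eq_div_iff (hnorm θ).ne' (hanti θ).ne',
      one_mul] at this
  exact ⟨c, pos_of_mul_pos_left ((hc' 0) ▸ hanti 0) (hnorm 0).le, hc'⟩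

theorem IsRadonPlane.exists_antinorm_eq_mul_norm (hradon : IsRadonPlane X)
    (hdim : Module.finrank ℝ X = 2) (halt : ω.IsAlt) (hnd : ω.SeparatingLeft) :
    ∃ c : ℝ, 0 < c ∧ ∀ y : X, antinorm ω y = c * ‖y‖ := by
  have hsep : ω.SeparatingRight := (halt.isRefl.nondegenerate_iff_separatingLeft.2 hnd).2
  obtain ⟨e₀, e₁, he⟩ := exists_apply_eq_one hdim hnd
  obtain ⟨c, hc0, hc⟩ := hradon.exists_antinorm_angleVec_eq hdim halt hsep he
  refine ⟨c, hc0, fun y => ?_⟩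
  obtain ⟨R, θ, rfl⟩ := exists_eq_smul_angleVec hdim halt he y
  rw [antinorm_smul, hc, norm_smul, norm_eq_abs, mul_left_comm]

theorem isRadonPlane_of_antinorm_eq_mul_norm (hdim : Module.finrank ℝ X = 2) (halt : ω.IsAlt)
    {c : ℝ} (hc : 0 < c) (hA : ∀ y : X, antinorm ω y = c * ‖y‖) : IsRadonPlane X := by
  intro v w hB
  rcases eq_or_ne v 0 with rfl | hv
  · exact fun l => by simp
  refine birkhoff_of_abs_apply_eq ω halt (by rw [hA]; exact mul_pos hc (norm_pos_iff.2 hv)) ?_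
  rw [← halt.neg, abs_neg, hB.abs_apply_eq ω hdim halt, hA, hA]
  ring

end RadonPlane

/-- A plane is Radon iff its anti-norm is a positive multiple of the norm. -/
theorem radon_iff_antinorm_multiple {X : Type*} [NormedAddCommGroup X] [NormedSpace ℝ X]
    (hdim : Module.finrank ℝ X = 2)
    (ω : X →ₗ[ℝ] X →ₗ[ℝ] ℝ)
    (halt : ∀ x : X, ω x x = 0)
    (hnd : ∀ x : X, (∀ y : X, ω x y = 0) → x = 0) :
    (∀ v w : X, Birkhoff v w → Birkhoff w v) ↔
      ∃ c : ℝ, 0 < c ∧ ∀ y : X, antinorm ω y = c * ‖y‖ := by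
  have : FiniteDimensional ℝ X := Module.finite_of_finrank_pos (by omega)
  exact ⟨fun hradon => IsRadonPlane.exists_antinorm_eq_mul_norm hradon hdim halt hnd,
    fun ⟨_, hc, hA⟩ => isRadonPlane_of_antinorm_eq_mul_norm hdim halt hc hA⟩
end

section
/- For an arbitrary normed plane with arc-length parametrization φ of the unit circle, one has ω(φ(t), φ'(t)) = ||φ'(t)||_a for all t. -/
/-!
Let `p = φ t` and `v = φ' t`. A norming functional `g` of `p` (`‖g‖ ≤ 1`, `g p = 1`) is
maximised along the curve at `t`, so `g v = 0`. Since `ω (p, v) > 0`, the vectors `p, v`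
form a basis of the plane, and the functional `ω (·, v)`, which also kills `v`, equals
`ω (p, v) • g`. Hence `ω (x, v) ≤ ω (p, v)` on the unit ball, with equality at `x = p`.
-/

theorem linearIndependent_pair_of_apply_ne_zero {K V : Type*} [Field K] [AddCommGroup V]
    [Module K V] {ω : V →ₗ[K] V →ₗ[K] K} (halt : ∀ x, ω x x = 0) {p v : V}
    (hpv : ω p v ≠ 0) : LinearIndependent K ![p, v] := by
  rw [LinearIndependent.pair_iff]
  intro a b hab
  have ha : a * ω p v = 0 := by simpa [halt] using congrArg (fun x => ω x v) hab
  have hb : b * ω p v = 0 := by simpa [halt] using congrArg (ω p) hab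
  exact ⟨(mul_eq_zero.1 ha).resolve_right hpv, (mul_eq_zero.1 hb).resolve_right hpv⟩

theorem LinearMap.eq_smul_of_apply_eq_zero_of_finrank_eq_two {K V : Type*} [Field K]
    [AddCommGroup V] [Module K V] (hdim : Module.finrank K V = 2) {p v : V}
    (hpv : LinearIndependent K ![p, v]) {f g : V →ₗ[K] K} (hf : f v = 0) (hg : g v = 0)
    (hgp : g p = 1) : f = f p • g := by
  let b := basisOfLinearIndependentOfCardEqFinrank hpv (by simp [hdim])
  have hb : ⇑b = ![p, v] := coe_basisOfLinearIndependentOfCardEqFinrank hpv _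
  refine b.ext fun i => ?_
  fin_cases i <;> simp [hb, hf, hg, hgp]

theorem HasDerivAt.apply_eq_zero_of_norming {E : Type*} [NormedAddCommGroup E]
    [NormedSpace ℝ E] {φ : ℝ → E} {v : E} {t : ℝ} (hφ : HasDerivAt φ v t)
    (hmax : ∀ s, ‖φ s‖ ≤ ‖φ t‖) {g : StrongDual ℝ E} (hg : ‖g‖ ≤ 1)
    (hgt : g (φ t) = ‖φ t‖) : g v = 0 := by
  have hloc : IsLocalMax (fun s => g (φ s)) t := Filter.Eventually.of_forall fun s =>
    calc g (φ s) ≤ ‖g‖ * ‖φ s‖ := (le_abs_self _).trans (g.le_opNorm _)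
      _ ≤ 1 * ‖φ t‖ := by gcongr; exact hmax s
      _ = g (φ t) := by rw [one_mul, hgt]
  exact hloc.hasDerivAt_eq_zero (g.hasFDerivAt.comp_hasDerivAt t hφ)

theorem antinorm_eq_of_forall_le {X : Type*} [NormedAddCommGroup X] [NormedSpace ℝ X]
    {ω : X →ₗ[ℝ] X →ₗ[ℝ] ℝ} {p y : X} (hp : ‖p‖ ≤ 1)
    (hle : ∀ x, ‖x‖ ≤ 1 → ω x y ≤ ω p y) : antinorm ω y = ω p y :=
  IsGreatest.csSup_eq ⟨⟨p, hp, rfl⟩, by rintro _ ⟨x, hx, rfl⟩; exact hle x hx⟩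

theorem omega_eq_antinorm_deriv_general {X : Type*} [NormedAddCommGroup X] [NormedSpace ℝ X]
    (hdim : Module.finrank ℝ X = 2)
    (ω : X →ₗ[ℝ] X →ₗ[ℝ] ℝ)
    (halt : ∀ x : X, ω x x = 0)
    (φ φ' : ℝ → X)
    (hderiv : ∀ t, HasDerivAt φ (φ' t) t)
    (hrange : Set.range φ = Metric.sphere (0 : X) 1)
    (horient : ∀ t, 0 < ω (φ t) (φ' t)) :
    ∀ t, ω (φ t) (φ' t) = antinorm ω (φ' t) := by
  intro t
  have hsph : ∀ s, ‖φ s‖ = 1 := fun s => by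
    simpa using (hrange ▸ Set.mem_range_self s : φ s ∈ Metric.sphere (0 : X) 1)
  obtain ⟨g, hg, hgp⟩ := exists_dual_vector'' ℝ (φ t)
  have hgv : g (φ' t) = 0 :=
    (hderiv t).apply_eq_zero_of_norming (fun s => by rw [hsph, hsph]) hg hgp
  have hω : ω.flip (φ' t) = ω (φ t) (φ' t) • (g : X →ₗ[ℝ] ℝ) :=
    LinearMap.eq_smul_of_apply_eq_zero_of_finrank_eq_two hdim
      (linearIndependent_pair_of_apply_ne_zero halt (horient t).ne') (halt _) hgv
      (by simp [hgp, hsph])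
  refine (antinorm_eq_of_forall_le (hsph t).le fun x hx => ?_).symm
  calc ω x (φ' t) = ω (φ t) (φ' t) * g x := by simpa using LinearMap.congr_fun hω x
    _ ≤ ω (φ t) (φ' t) * 1 :=
        mul_le_mul_of_nonneg_left ((le_abs_self _).trans ((g.unit_le_opNorm x hx).trans hg))
          (horient t).le
    _ = ω (φ t) (φ' t) := mul_one _

/-- For the arc-length parametrization of the unit circle of an arbitrary
normed plane, `ω(φ(t), φ'(t)) = ‖φ'(t)‖ₐ`. -/
theorem omega_eq_antinorm_deriv {X : Type*} [NormedAddCommGroup X] [NormedSpace ℝ X]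
    (hdim : Module.finrank ℝ X = 2)
    (ω : X →ₗ[ℝ] X →ₗ[ℝ] ℝ)
    (halt : ∀ x : X, ω x x = 0)
    (hnd : ∀ x : X, (∀ y : X, ω x y = 0) → x = 0)
    (L : ℝ) (hL : 0 < L)
    (φ φ' : ℝ → X)
    (hderiv : ∀ t, HasDerivAt φ (φ' t) t)
    (hper : ∀ t, φ (t + L) = φ t)
    (hrange : Set.range φ = Metric.sphere (0 : X) 1)
    (hinj : Set.InjOn φ (Set.Ico 0 L))
    (hspeed : ∀ t, ‖φ' t‖ = 1)
    (horient : ∀ t, 0 < ω (φ t) (φ' t)) :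
    ∀ t, ω (φ t) (φ' t) = antinorm ω (φ' t) :=
  omega_eq_antinorm_deriv_general hdim ω halt φ φ' hderiv hrange horient
end

section
/- If two parallel lines support a convex body K at points p and q respectively, and h₀, h₁ denote the norm-distances from the origin (contained in the interior of K) to these lines, then h₀ + h₁ ≤ ||p − q|| ≤ diam(K), where the diameter is taken in the norm. -/
/-- The norm-distance from the origin to the line through `p` with direction `w`. -/
noncomputable def distToLine {X : Type*} [NormedAddCommGroup X] [NormedSpace ℝ X]
    (p w : X) : ℝ :=
  sInf (Set.range fun t : ℝ => ‖p + t • w‖)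

lemma distToLine_le {X : Type*} [NormedAddCommGroup X] [NormedSpace ℝ X]
    (p w : X) (t : ℝ) : distToLine p w ≤ ‖p + t • w‖ := by
  apply csInf_le
  · exact ⟨0, by rintro x ⟨s, rfl⟩; positivity⟩
  · exact ⟨t, rfl⟩

theorem supp_dist_le_diam {X : Type*} [NormedAddCommGroup X] [NormedSpace ℝ X]
    (hdim : Module.finrank ℝ X = 2)
    (K : Set X) (hKconv : Convex ℝ K) (hKcomp : IsCompact K)
    (h0 : (0 : X) ∈ interior K)
    (w : X) (hw : w ≠ 0) (p q : X) (hp : p ∈ K) (hq : q ∈ K)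
    (f : X →ₗ[ℝ] ℝ) (hf : f ≠ 0) (hfw : f w = 0)
    (hsuppP : ∀ x ∈ K, f x ≤ f p)
    (hsuppQ : ∀ x ∈ K, f q ≤ f x) :
    distToLine p w + distToLine q w ≤ ‖p - q‖ ∧ ‖p - q‖ ≤ Metric.diam K := by
  have hfin : FiniteDimensional ℝ X := FiniteDimensional.of_finrank_eq_succ hdim
  have h0K : (0 : X) ∈ K := interior_subset h0
  have hfp : 0 ≤ f p := by have := hsuppP 0 h0K; simpa using this
  have hfq : f q ≤ 0 := by have := hsuppQ 0 h0K; simpa using this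
  -- nondegeneracy: f q < f p
  have hne : f q < f p := by
    rcases lt_or_eq_of_le (hfq.trans hfp) with h | h
    · exact h
    · exfalso
      have hp0 : f p = 0 := le_antisymm (h ▸ hfq) hfp
      have hq0 : f q = 0 := h.symm ▸ hp0
      obtain ⟨ε, hε, hball⟩ := Metric.mem_nhds_iff.mp (mem_interior_iff_mem_nhds.mp h0)
      apply hf
      ext y
      by_cases hy : y = 0
      · simp [hy]
      · have hny : 0 < ‖y‖ := norm_pos_iff.mpr hy
        set t : ℝ := ε / (2 * ‖y‖) with ht
        have htpos : 0 < t := by positivity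
        have hmem : t • y ∈ K := by
          apply hball
          simp only [Metric.mem_ball, dist_zero_right, norm_smul, Real.norm_eq_abs,
            abs_of_pos htpos]
          have heq : ‖y‖ * (ε / (2 * ‖y‖)) = ε / 2 := by
            field_simp
          rw [ht]
          nlinarith [heq]
        have h1 : f (t • y) ≤ 0 := hp0 ▸ hsuppP _ hmem
        have h2 : 0 ≤ f (t • y) := hq0 ▸ hsuppQ _ hmem
        have h3 : f (t • y) = 0 := le_antisymm h1 h2
        rw [map_smul] at h3
        simp only [smul_eq_mul] at h3
        have := mul_eq_zero.mp h3
        rcases this with h | h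
        · exact absurd h htpos.ne'
        · simp [h]
  -- ker f = span {w}
  have hker : LinearMap.ker f = Submodule.span ℝ {w} := by
    have hle : Submodule.span ℝ {w} ≤ LinearMap.ker f := by
      rw [Submodule.span_le]
      intro x hx
      rw [Set.mem_singleton_iff] at hx
      simpa [hx] using hfw
    have hsur : Function.Surjective f := by
      obtain ⟨x, hx⟩ : ∃ x, f x ≠ 0 := by
        by_contra h
        push_neg at h
        exact hf (LinearMap.ext fun y => by simp [h y])
      intro c
      exact ⟨(c / f x) • x, by simp [map_smul, div_mul_cancel₀ _ hx]⟩
    have hrange : LinearMap.range f = ⊤ := LinearMap.range_eq_top.mpr hsur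
    have hrk := f.finrank_range_add_finrank_ker
    rw [hrange, finrank_top, hdim] at hrk
    have hkerdim : Module.finrank ℝ (LinearMap.ker f) = 1 := by
      have : Module.finrank ℝ ℝ = 1 := Module.finrank_self ℝ
      omega
    exact (Submodule.eq_of_le_of_finrank_eq hle (by
      rw [finrank_span_singleton hw, hkerdim])).symm
  -- main estimate
  constructor
  · set D : ℝ := f p - f q with hD
    have hDpos : 0 < D := sub_pos.mpr hne
    set l : ℝ := f p / D with hl
    have hl0 : 0 ≤ l := div_nonneg hfp hDpos.le
    have hl1 : l ≤ 1 := by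
      rw [hl, div_le_one hDpos]
      linarith
    set z : X := p + l • (q - p) with hz
    have hfz : f z = 0 := by
      simp only [hz, map_add, map_smul, map_sub, smul_eq_mul]
      rw [hl]
      field_simp
      ring
    have hzspan : z ∈ Submodule.span ℝ {w} := hker ▸ (LinearMap.mem_ker.mpr hfz)
    obtain ⟨c, hc⟩ := Submodule.mem_span_singleton.mp hzspan
    have h1 : distToLine p w ≤ l * ‖p - q‖ := by
      have := distToLine_le p w (-c)
      have hp' : p + (-c) • w = l • (p - q) := by
        rw [neg_smul, hc, hz]
        module
      rw [hp', norm_smul, Real.norm_eq_abs, abs_of_nonneg hl0] at this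
      exact this
    have h2 : distToLine q w ≤ (1 - l) * ‖p - q‖ := by
      have := distToLine_le q w (-c)
      have hq' : q + (-c) • w = (1 - l) • (q - p) := by
        rw [neg_smul, hc, hz]
        module
      rw [hq', norm_smul, Real.norm_eq_abs, abs_of_nonneg (by linarith),
        norm_sub_rev] at this
      exact this
    calc distToLine p w + distToLine q w ≤ l * ‖p - q‖ + (1 - l) * ‖p - q‖ :=
          add_le_add h1 h2
      _ = ‖p - q‖ := by ring
  · have : dist p q ≤ Metric.diam K := Metric.dist_le_diam_of_mem hKcomp.isBounded hp hq
    rwa [dist_eq_norm] at this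
end

section
/- In a Radon plane (normalized so that the anti-norm equals the norm), the Minkowski length of a C² simple closed strictly convex curve γ containing the origin equals the integral of its Minkowski support function over one period: l(γ) = ∫₀^{l(S)} h_γ(u) du, where the parametrization satisfies γ'(u) = f(u)φ'(u) with f > 0 and φ the arc-length parametrization of the unit circle (a Cauchy-type formula). -/
/-!
Put `G u = ω (γ u) (φ u)`. Since `γ' = f • φ'`, `ω` is alternating and `ω (φ u) (φ' u) = 1`,
`G' = ω (γ u) (φ' u) - f u = h_γ u - ‖γ' u‖`, and `G` is `L`-periodic, so integrating `G'` over a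
period gives the formula. The only subtlety is integrability: `φ'` is merely a derivative, but
`h_γ` is bounded, so `G'` is a derivative bounded from above, hence integrable.
-/

open MeasureTheory Set intervalIntegral

theorem intervalIntegrable_deriv_of_le {g g' : ℝ → ℝ} {a b K : ℝ}
    (hcont : ContinuousOn g (uIcc a b))
    (hderiv : ∀ x ∈ Ioo (min a b) (max a b), HasDerivAt g (g' x) x)
    (hle : ∀ x ∈ Ioo (min a b) (max a b), g' x ≤ K) : IntervalIntegrable g' volume a b := by
  have hsub : IntervalIntegrable (fun x => K - g' x) volume a b :=
    intervalIntegrable_deriv_of_nonneg ((continuousOn_const.mul continuousOn_id).sub hcont)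
      (fun x hx => (((hasDerivAt_id x).const_mul K).sub (hderiv x hx)).congr_deriv (by simp))
      (fun x hx => sub_nonneg.2 (hle x hx))
  simpa only [sub_sub_cancel] using (intervalIntegrable_const (c := K)).sub hsub

theorem integral_eq_of_hasDerivAt_sub {G h f : ℝ → ℝ} {a b K : ℝ}
    (hG : ∀ x, HasDerivAt G (h x - f x) x) (hGab : G a = G b)
    (hh : IntervalIntegrable h volume a b) (hhK : ∀ x ∈ Ioo (min a b) (max a b), h x ≤ K)
    (hf : ∀ x, 0 ≤ f x) : ∫ x in a..b, f x = ∫ x in a..b, h x := by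
  have hG'int : IntervalIntegrable (fun x => h x - f x) volume a b :=
    intervalIntegrable_deriv_of_le (K := K) (HasDerivAt.continuousOn fun x _ => hG x)
      (fun x _ => hG x) fun x hx => by linarith [hhK x hx, hf x]
  have hfint : IntervalIntegrable f volume a b := by simpa using hh.sub hG'int
  have hloop := integral_eq_sub_of_hasDerivAt (fun x _ => hG x) hG'int
  rw [integral_sub hh hfint, hGab, sub_self, sub_eq_zero] at hloop
  exact hloop.symm

namespace ContinuousLinearMap

variable {E F : Type*} [NormedAddCommGroup E] [NormedSpace ℝ E]
  [NormedAddCommGroup F] [NormedSpace ℝ F]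

section Pairing

variable (B : E →L[ℝ] F →L[ℝ] ℝ) {γ : ℝ → E} {ψ : ℝ → F} {a b C : ℝ}

theorem exists_bound_apply₂ (hγ : ContinuousOn γ (uIcc a b)) (hψ : ∀ u, ‖ψ u‖ ≤ C) :
    ∃ K, ∀ u ∈ uIcc a b, ‖B (γ u) (ψ u)‖ ≤ K := by
  obtain ⟨M, hM⟩ := isCompact_uIcc.exists_bound_of_continuousOn hγ
  refine ⟨‖B‖ * M * C, fun u hu => ?_⟩
  calc ‖B (γ u) (ψ u)‖ ≤ ‖B‖ * ‖γ u‖ * ‖ψ u‖ := B.le_opNorm₂ _ _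
    _ ≤ ‖B‖ * M * C := by
      have hγM := hM u hu
      gcongr
      · exact mul_nonneg (norm_nonneg B) ((norm_nonneg _).trans hγM)
      · exact hψ u

theorem intervalIntegrable_apply₂ (hγ : Continuous γ) (hψm : AEStronglyMeasurable ψ)
    (hψ : ∀ u, ‖ψ u‖ ≤ C) : IntervalIntegrable (fun u => B (γ u) (ψ u)) volume a b := by
  obtain ⟨K, hK⟩ := B.exists_bound_apply₂ hγ.continuousOn hψ
  rw [intervalIntegrable_iff]
  refine Measure.integrableOn_of_bounded (M := K) measure_Ioc_lt_top.ne
    (B.continuous₂.comp_aestronglyMeasurable (hγ.aestronglyMeasurable.prodMk hψm)) ?_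
  exact (ae_restrict_iff' measurableSet_uIoc).2
    (ae_of_all _ fun u hu => hK u (uIoc_subset_uIcc hu))

end Pairing

theorem hasDerivAt_apply_of_hasDerivAt_smul (B : E →L[ℝ] E →L[ℝ] ℝ) (halt : ∀ x, B x x = 0)
    {γ φ : ℝ → E} {v : E} {c u : ℝ} (hγ : HasDerivAt γ (c • v) u) (hφ : HasDerivAt φ v u)
    (hφv : B (φ u) v = 1) :
    HasDerivAt (fun t => B (γ t) (φ t)) (B (γ u) v - c) u := by
  have hanti : B v (φ u) = -B (φ u) v := by
    have hsum := halt (v + φ u)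
    simp only [map_add, add_apply, halt] at hsum
    linarith
  have hback : B (c • v) (φ u) = -c := by simp [hanti, hφv]
  refine (B.hasDerivAt_of_bilinear (fun _ => hγ) (fun _ => hφ)).congr_deriv ?_
  rw [hback]
  ring

end ContinuousLinearMap

theorem length_eq_integral_support_general {X : Type*} [NormedAddCommGroup X] [NormedSpace ℝ X]
    (hdim : Module.finrank ℝ X = 2)
    (ω : X →ₗ[ℝ] X →ₗ[ℝ] ℝ)
    (halt : ∀ x : X, ω x x = 0)
    (L : ℝ)
    (φ φ' : ℝ → X)
    (hφderiv : ∀ t, HasDerivAt φ (φ' t) t)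
    (hφper : ∀ t, φ (t + L) = φ t)
    (hφspeed : ∀ t, ‖φ' t‖ = 1)
    (hRadonNormalized : ∀ t, ω (φ t) (φ' t) = 1)
    (γ γ' : ℝ → X) (f : ℝ → ℝ)
    (hγderiv : ∀ u, HasDerivAt γ (γ' u) u)
    (hγper : ∀ u, γ (u + L) = γ u)
    (hf : ∀ u, 0 < f u)
    (htang : ∀ u, γ' u = f u • φ' u) :
    (∫ u in (0 : ℝ)..L, ‖γ' u‖) = ∫ u in (0 : ℝ)..L, ω (γ u) (φ' u) := by
  have : FiniteDimensional ℝ X := .of_finrank_eq_succ hdim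
  let Ω := ω.toContinuousBilinearMap
  have hγcont : Continuous γ := continuous_iff_continuousAt.2 fun u => (hγderiv u).continuousAt
  have hnorm : ∀ u, ‖γ' u‖ = f u := fun u => by
    rw [htang, norm_smul, hφspeed, mul_one, Real.norm_of_nonneg (hf u).le]
  have hG : ∀ u, HasDerivAt (fun u => Ω (γ u) (φ u)) (Ω (γ u) (φ' u) - f u) u := fun u =>
    Ω.hasDerivAt_apply_of_hasDerivAt_smul halt (htang u ▸ hγderiv u) (hφderiv u)
      (hRadonNormalized u)
  have hh : IntervalIntegrable (fun u => Ω (γ u) (φ' u)) volume 0 L := by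
    have hφ' : φ' = deriv φ := funext fun t => (hφderiv t).deriv.symm
    exact Ω.intervalIntegrable_apply₂ hγcont (hφ' ▸ aestronglyMeasurable_deriv φ _)
      (fun u => (hφspeed u).le)
  obtain ⟨K, hK⟩ := Ω.exists_bound_apply₂ hγcont.continuousOn (fun u => (hφspeed u).le)
  have hclosed : Ω (γ 0) (φ 0) = Ω (γ L) (φ L) := by rw [← hγper 0, ← hφper 0, zero_add]
  simp only [hnorm]
  exact integral_eq_of_hasDerivAt_sub hG hclosed hh
    (fun u hu => (le_abs_self _).trans (hK u (Ioo_subset_Icc_self hu))) fun u => (hf u).le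

/-- Cauchy-type formula in a Radon plane: the Minkowski length of a closed convex
curve equals the integral of its Minkowski support function `h_γ(u) = ω(γ(u), φ'(u))`. -/
theorem length_eq_integral_support {X : Type*} [NormedAddCommGroup X] [NormedSpace ℝ X]
    (hdim : Module.finrank ℝ X = 2)
    (ω : X →ₗ[ℝ] X →ₗ[ℝ] ℝ)
    (halt : ∀ x : X, ω x x = 0)
    (hnd : ∀ x : X, (∀ y : X, ω x y = 0) → x = 0)
    (L : ℝ) (hL : 0 < L)
    (φ φ' : ℝ → X)
    (hφderiv : ∀ t, HasDerivAt φ (φ' t) t)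
    (hφper : ∀ t, φ (t + L) = φ t)
    (hφrange : Set.range φ = Metric.sphere (0 : X) 1)
    (hφinj : Set.InjOn φ (Set.Ico 0 L))
    (hφspeed : ∀ t, ‖φ' t‖ = 1)
    (hRadonNormalized : ∀ t, ω (φ t) (φ' t) = 1)
    (γ γ' : ℝ → X) (f : ℝ → ℝ)
    (hγderiv : ∀ u, HasDerivAt γ (γ' u) u)
    (hγper : ∀ u, γ (u + L) = γ u)
    (hγinj : Set.InjOn γ (Set.Ico 0 L))
    (hf : ∀ u, 0 < f u)
    (htang : ∀ u, γ' u = f u • φ' u)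
    (horig : (0 : X) ∈ interior (convexHull ℝ (Set.range γ))) :
    (∫ u in (0 : ℝ)..L, ‖γ' u‖) = ∫ u in (0 : ℝ)..L, ω (γ u) (φ' u) :=
  length_eq_integral_support_general hdim ω halt L φ φ' hφderiv hφper hφspeed hRadonNormalized γ γ'
    f hγderiv hγper hf htang
end
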